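/- arXiv:math-ph/0503031 — 3 statements merged into one kernel-verified Lean document; each statement's English description precedes it below -/
import Mathlib

section
/- Let Y > 0, let V : ℝ → ℂ be continuous and 1-periodic, let W : S_Y → ℂ be continuous, and let ε > 0 and E ∈ ℂ. Let f, g : ℝ × S_Y → ℂ be such that for every φ ∈ S_Y the maps x ↦ f(x,φ) and x ↦ g(x,φ) are twice continuously differentiable and satisfy −u''(x) + (V(x) + W(εx + φ))u(x) = E u(x) for all x ∈ ℝ, and such that both f and g are consistent: f(x+1,φ) = f(x,φ+ε) and g(x+1,φ) = g(x,φ+ε) for all x ∈ ℝ, φ ∈ S_Y. Then the Wronskian w(φ) := ∂ₓf(0,φ)·g(0,φ) − f(0,φ)·∂ₓg(0,φ) satisfies w(φ + ε) = w(φ) for every φ ∈ S_Y. -/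
/-! Translating `φ` by `ε` amounts, by consistency, to translating `x` by `1`; and for fixed `φ`
the Wronskian of two solutions of `u'' = (V + W(εx + φ) - E) u` does not depend on `x`. -/

section Wronskian

variable {𝔸 : Type*} [NormedCommRing 𝔸] [NormedAlgebra ℝ 𝔸]

noncomputable def wronskian (F G : ℝ → 𝔸) (x : ℝ) : 𝔸 :=
  deriv F x * G x - F x * deriv G x

variable {F G : ℝ → 𝔸}

lemma wronskian_comp_add_const (a x : ℝ) :
    wronskian (fun y => F (y + a)) (fun y => G (y + a)) x = wronskian F G (x + a) := by
  simp only [wronskian, deriv_comp_add_const]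

lemma hasDerivAt_wronskian {x : ℝ} (hF : DifferentiableAt ℝ F x) (hG : DifferentiableAt ℝ G x)
    (hF' : DifferentiableAt ℝ (deriv F) x) (hG' : DifferentiableAt ℝ (deriv G) x) :
    HasDerivAt (wronskian F G) (deriv (deriv F) x * G x - F x * deriv (deriv G) x) x :=
  (hF'.hasDerivAt.mul hG.hasDerivAt).sub (hF.hasDerivAt.mul hG'.hasDerivAt) |>.congr_deriv
    (by ring)

lemma wronskian_eq_of_deriv_deriv_eq_mul (q : ℝ → 𝔸)
    (hF : Differentiable ℝ F) (hG : Differentiable ℝ G)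
    (hF' : Differentiable ℝ (deriv F)) (hG' : Differentiable ℝ (deriv G))
    (hFq : ∀ x, deriv (deriv F) x = q x * F x) (hGq : ∀ x, deriv (deriv G) x = q x * G x)
    (a b : ℝ) : wronskian F G a = wronskian F G b := by
  have hW x := hasDerivAt_wronskian (hF x) (hG x) (hF' x) (hG' x)
  refine is_const_of_deriv_eq_zero (fun x => (hW x).differentiableAt) (fun x => ?_) a b
  rw [(hW x).deriv, hFq, hGq]
  ring

end Wronskian

theorem stmt_5_general (Y : ℝ)
    (V : ℝ → ℂ)
    (W : ℂ → ℂ)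
    (ε : ℝ) (E : ℂ)
    (f g : ℝ → ℂ → ℂ)
    (hf2 : ∀ φ : ℂ, |φ.im| ≤ Y → ContDiff ℝ 2 (fun x : ℝ => f x φ))
    (hg2 : ∀ φ : ℂ, |φ.im| ≤ Y → ContDiff ℝ 2 (fun x : ℝ => g x φ))
    (hfeq : ∀ φ : ℂ, |φ.im| ≤ Y → ∀ x : ℝ,
      -(deriv (deriv (fun y : ℝ => f y φ)) x) + (V x + W ((ε * x : ℝ) + φ)) * f x φ
        = E * f x φ)
    (hgeq : ∀ φ : ℂ, |φ.im| ≤ Y → ∀ x : ℝ,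
      -(deriv (deriv (fun y : ℝ => g y φ)) x) + (V x + W ((ε * x : ℝ) + φ)) * g x φ
        = E * g x φ)
    (hfcons : ∀ x : ℝ, ∀ φ : ℂ, |φ.im| ≤ Y → f (x + 1) φ = f x (φ + ε))
    (hgcons : ∀ x : ℝ, ∀ φ : ℂ, |φ.im| ≤ Y → g (x + 1) φ = g x (φ + ε)) :
    ∀ φ : ℂ, |φ.im| ≤ Y →
      deriv (fun x : ℝ => f x (φ + ε)) 0 * g 0 (φ + ε)
          - f 0 (φ + ε) * deriv (fun x : ℝ => g x (φ + ε)) 0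
        = deriv (fun x : ℝ => f x φ) 0 * g 0 φ
          - f 0 φ * deriv (fun x : ℝ => g x φ) 0 := by
  intro φ hφ
  have hf_shift : (fun x : ℝ => f x (φ + ε)) = fun x => f (x + 1) φ :=
    funext fun x => (hfcons x φ hφ).symm
  have hg_shift : (fun x : ℝ => g x (φ + ε)) = fun x => g (x + 1) φ :=
    funext fun x => (hgcons x φ hφ).symm
  change wronskian (fun x => f x (φ + ε)) (fun x => g x (φ + ε)) 0
    = wronskian (fun x => f x φ) (fun x => g x φ) 0
  rw [hf_shift, hg_shift, wronskian_comp_add_const (F := fun x => f x φ) (G := fun x => g x φ),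
    zero_add]
  exact wronskian_eq_of_deriv_deriv_eq_mul (fun x => V x + W ((ε * x : ℝ) + φ) - E)
    ((hf2 φ hφ).differentiable two_ne_zero) ((hg2 φ hφ).differentiable two_ne_zero)
    (hf2 φ hφ).differentiable_deriv_two (hg2 φ hφ).differentiable_deriv_two
    (fun x => by linear_combination -hfeq φ hφ x) (fun x => by linear_combination -hgeq φ hφ x)
    1 0

/-- Periodicity principle of the paper: the Wronskian (at `x = 0`) of two consistent
solutions of the perturbed periodic equation on the strip `S_Y` is `ε`-periodic in the
parameter `φ`. -/
theorem stmt_5 (Y : ℝ) (hY : 0 < Y)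
    (V : ℝ → ℂ) (hV : Continuous V) (hVper : ∀ x : ℝ, V (x + 1) = V x)
    (W : ℂ → ℂ) (hW : ContinuousOn W {z : ℂ | |z.im| ≤ Y})
    (ε : ℝ) (hε : 0 < ε) (E : ℂ)
    (f g : ℝ → ℂ → ℂ)
    (hf2 : ∀ φ : ℂ, |φ.im| ≤ Y → ContDiff ℝ 2 (fun x : ℝ => f x φ))
    (hg2 : ∀ φ : ℂ, |φ.im| ≤ Y → ContDiff ℝ 2 (fun x : ℝ => g x φ))
    (hfeq : ∀ φ : ℂ, |φ.im| ≤ Y → ∀ x : ℝ,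
      -(deriv (deriv (fun y : ℝ => f y φ)) x) + (V x + W ((ε * x : ℝ) + φ)) * f x φ
        = E * f x φ)
    (hgeq : ∀ φ : ℂ, |φ.im| ≤ Y → ∀ x : ℝ,
      -(deriv (deriv (fun y : ℝ => g y φ)) x) + (V x + W ((ε * x : ℝ) + φ)) * g x φ
        = E * g x φ)
    (hfcons : ∀ x : ℝ, ∀ φ : ℂ, |φ.im| ≤ Y → f (x + 1) φ = f x (φ + ε))
    (hgcons : ∀ x : ℝ, ∀ φ : ℂ, |φ.im| ≤ Y → g (x + 1) φ = g x (φ + ε)) :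
    ∀ φ : ℂ, |φ.im| ≤ Y →
      deriv (fun x : ℝ => f x (φ + ε)) 0 * g 0 (φ + ε)
          - f 0 (φ + ε) * deriv (fun x : ℝ => g x (φ + ε)) 0
        = deriv (fun x : ℝ => f x φ) 0 * g 0 φ
          - f 0 φ * deriv (fun x : ℝ => g x φ) 0 :=
  stmt_5_general Y V W ε E f g hf2 hg2 hfeq hgeq hfcons hgcons
end

section
/- Let g : ℝ → ℂ be a Schwartz function and let ε > 0. Then ε · Σ_{l∈ℤ} g(ε(lπ + π/2)) = (1/π) · Σ_{n∈ℤ} (−1)^n ∫_ℝ g(u) e^{−2inu/ε} du, both series being absolutely convergent. -/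
open MeasureTheory Real Complex Asymptotics Filter FourierTransform

lemma htg_affine (a b : ℝ) : Function.HasTemperateGrowth (fun t : ℝ => a * t + b) := by
  apply Function.HasTemperateGrowth.of_fderiv (k := 1) (C := |a| + |b|)
  · have : fderiv ℝ (fun t : ℝ => a * t + b)
        = fun _ : ℝ => ContinuousLinearMap.smulRight (1 : ℝ →L[ℝ] ℝ) a := by
      funext x
      have : HasDerivAt (fun t : ℝ => a * t + b) a x := by
        simpa using ((hasDerivAt_id x).const_mul a).add_const b
      exact this.hasFDerivAt.fderiv
    rw [this]
    exact .const _
  · exact fun x => ((differentiable_id.const_mul a).add_const b) x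
  · intro x
    have h1 : ‖a * x + b‖ ≤ |a| * |x| + |b| := by
      simpa [abs_mul] using abs_add_le (a * x) b
    have h2 : (0:ℝ) ≤ |a| := abs_nonneg a
    have h3 : (0:ℝ) ≤ |b| := abs_nonneg b
    have h4 : (0:ℝ) ≤ |x| := abs_nonneg x
    calc ‖a * x + b‖ ≤ |a| * |x| + |b| := h1
      _ ≤ (|a| + |b|) * (1 + ‖x‖) ^ 1 := by
          simp only [pow_one, Real.norm_eq_abs]
          nlinarith

lemma antilip_affine (a b : ℝ) (ha : a ≠ 0) :
    AntilipschitzWith (|a|⁻¹).toNNReal (fun t : ℝ => a * t + b) := by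
  refine AntilipschitzWith.of_le_mul_dist fun x y => ?_
  have : dist (a * x + b) (a * y + b) = |a| * dist x y := by
    rw [Real.dist_eq, Real.dist_eq]
    rw [show a * x + b - (a * y + b) = a * (x - y) by ring, abs_mul]
  rw [this]
  rw [Real.coe_toNNReal _ (by positivity)]
  have hapos : 0 < |a| := abs_pos.mpr ha
  field_simp
  exact le_rfl

lemma aux_summable (f : SchwartzMap ℝ ℂ) : Summable fun n : ℤ => ‖f n‖ :=
  summable_of_isBigO (Real.summable_abs_int_rpow one_lt_two)
    (((f.isBigO_cocompact_rpow (-2)).norm_left).comp_tendsto Int.tendsto_coe_cofinite)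

/-- Poisson summation formula applied as in the paper's proof of the trace formula:
for a Schwartz function `g` and `ε > 0`,
`ε Σ_l g(ε(lπ + π/2)) = (1/π) Σ_n (-1)^n ∫ g(u) e^{-2inu/ε} du`,
both series being absolutely convergent. -/
theorem stmt_8 (g : SchwartzMap ℝ ℂ) (ε : ℝ) (hε : 0 < ε) :
    Summable (fun l : ℤ => ‖g (ε * (l * Real.pi + Real.pi / 2))‖) ∧
    Summable (fun n : ℤ =>
      ‖∫ u : ℝ, g u * Complex.exp (-2 * Complex.I * (n : ℂ) * (u : ℂ) / (ε : ℂ))‖) ∧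
    (ε : ℂ) * ∑' l : ℤ, g (ε * (l * Real.pi + Real.pi / 2))
      = (1 / (Real.pi : ℂ)) * ∑' n : ℤ, (-1 : ℂ) ^ n *
          ∫ u : ℝ, g u * Complex.exp (-2 * Complex.I * (n : ℂ) * (u : ℂ) / (ε : ℂ)) := by
  have hπ : (0:ℝ) < Real.pi := Real.pi_pos
  set c : ℝ := ε * Real.pi with hcdef
  have hc : 0 < c := mul_pos hε hπ
  -- Schwartz maps
  set h : SchwartzMap ℝ ℂ :=
    SchwartzMap.compCLMOfAntilipschitz ℝ (htg_affine c 0) (antilip_affine c 0 hc.ne') g with hhdef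
  set s : SchwartzMap ℝ ℂ :=
    SchwartzMap.compCLMOfAntilipschitz ℝ (htg_affine c (c/2)) (antilip_affine c (c/2) hc.ne') g
    with hsdef
  have hh : ∀ t : ℝ, h t = g (c * t) := fun t => by simp [hhdef]
  have hs : ∀ t : ℝ, s t = g (c * t + c / 2) := fun t => by simp [hsdef]
  have key : ∀ l : ℤ, g (ε * (l * Real.pi + Real.pi / 2)) = s l := by
    intro l
    rw [hs]
    congr 1
    ring
  have keyh : ∀ l : ℤ, h (1/2 + l) = s l := by
    intro l
    rw [hh, hs]
    congr 1
    ring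
  -- the Fourier integral identity
  have hI : ∀ n : ℤ,
      (∫ u : ℝ, g u * Complex.exp (-2 * Complex.I * (n : ℂ) * (u : ℂ) / (ε : ℂ)))
        = (c : ℂ) * 𝓕 (⇑h) n := by
    intro n
    rw [Real.fourier_real_eq_integral_exp_smul]
    set F : ℝ → ℂ := fun u => g u * Complex.exp (-2 * Complex.I * (n : ℂ) * (u : ℂ) / (ε : ℂ))
      with hF
    have h1 : ∀ t : ℝ, Complex.exp (↑(-2 * Real.pi * t * n) * Complex.I) • h t = F (c * t) := by
      intro t
      rw [hh]
      simp only [hF, smul_eq_mul]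
      rw [mul_comm]
      congr 1
      congr 1
      rw [hcdef]
      have hε' : (ε:ℂ) ≠ 0 := by exact_mod_cast hε.ne'
      push_cast
      field_simp
    rw [MeasureTheory.integral_congr_ae (Filter.Eventually.of_forall h1)]
    rw [MeasureTheory.Measure.integral_comp_mul_left F c, abs_of_pos (inv_pos.mpr hc),
      Complex.real_smul, Complex.ofReal_inv,
      mul_inv_cancel_left₀ (by exact_mod_cast hc.ne' : (c:ℂ) ≠ 0)]
  -- Poisson summation
  have hp := SchwartzMap.tsum_eq_tsum_fourier h (1/2 : ℝ)
  simp only [SchwartzMap.fourier_coe] at hp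
  have hf4 : ∀ n : ℤ, (fourier n ((1/2 : ℝ) : UnitAddCircle) : ℂ) = (-1 : ℂ) ^ n := by
    intro n
    rw [fourier_coe_apply]
    have : 2 * (Real.pi:ℂ) * Complex.I * (n:ℂ) * ((1/2 : ℝ):ℂ) / ((1:ℝ):ℂ)
        = (n:ℂ) * ((Real.pi:ℂ) * Complex.I) := by push_cast; ring
    rw [this, Complex.exp_int_mul, Complex.exp_pi_mul_I]
  have hsum2 : Summable fun n : ℤ => ‖𝓕 (⇑h) n‖ := by
    simpa [SchwartzMap.fourier_coe] using aux_summable (SchwartzMap.fourierTransformCLM ℝ h)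
  refine ⟨?_, ?_, ?_⟩
  · simp only [key]
    exact aux_summable s
  · have heq : (fun n : ℤ =>
        ‖∫ u : ℝ, g u * Complex.exp (-2 * Complex.I * (n : ℂ) * (u : ℂ) / (ε : ℂ))‖)
        = fun n : ℤ => ‖(c:ℂ)‖ * ‖𝓕 (⇑h) n‖ := by
      funext n; rw [hI n, norm_mul]
    rw [heq]
    exact hsum2.mul_left _
  · have t1 : ∑' l : ℤ, (g (ε * (l * Real.pi + Real.pi / 2)) : ℂ) = ∑' l : ℤ, h (1/2 + l) :=
      tsum_congr fun l => by rw [key l, keyh l]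
    have t2 : ∑' n : ℤ, ((-1:ℂ)^n * ∫ u : ℝ, g u *
          Complex.exp (-2 * Complex.I * (n : ℂ) * (u : ℂ) / (ε : ℂ)))
        = ∑' n : ℤ, (-1:ℂ)^n * ((c:ℂ) * 𝓕 (⇑h) n) := tsum_congr fun n => by rw [hI n]
    rw [t1, t2, hp]
    have t3 : ∑' n : ℤ, 𝓕 (⇑h) n * (fourier n ((1/2 : ℝ) : UnitAddCircle))
        = ∑' n : ℤ, 𝓕 (⇑h) n * (-1:ℂ)^n := tsum_congr fun n => by rw [hf4 n]
    rw [t3, ← tsum_mul_left, ← tsum_mul_left]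
    refine tsum_congr fun n => ?_
    rw [hcdef]
    have hπ' : (Real.pi:ℂ) ≠ 0 := by exact_mod_cast hπ.ne'
    push_cast
    field_simp
end

section
/- Let U ⊆ ℂ be open and symmetric with respect to the real axis (U = {conj z : z ∈ U}), and let g be holomorphic on U with conj(g(conj z)) = g(z) for all z ∈ U and Re g(z) > 0 for all z ∈ U. Then there exists a holomorphic function h on U such that g(z) = h(z) · conj(h(conj z)) for all z ∈ U. -/
open ComplexConjugate

/-! `h = exp (log g / 2)` is a holomorphic square root of `g`, since `g` takes values in the
slit plane. Off the negative real axis the principal logarithm commutes with conjugation, so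
`conj (h (conj z)) = exp (log (conj (g (conj z))) / 2) = h z`, whence `h z * conj (h (conj z))
= h z ^ 2 = g z`. -/

namespace Complex

theorem exp_log_div_two_mul_self {w : ℂ} (hw : w ≠ 0) :
    exp (log w / 2) * exp (log w / 2) = w := by
  rw [← exp_add, add_halves, exp_log hw]

theorem conj_exp_log_div_two {w : ℂ} (hw : w.arg ≠ Real.pi) :
    conj (exp (log w / 2)) = exp (log (conj w) / 2) := by
  rw [← exp_conj, map_div₀, log_conj w hw, map_ofNat]

end Complex

open Complex in
theorem exists_eq_mul_conj_comp_conj_of_mapsTo_slitPlane {U : Set ℂ} {g : ℂ → ℂ}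
    (hsym : ∀ z ∈ U, conj z ∈ U) (hg : DifferentiableOn ℂ g U)
    (hgsym : ∀ z ∈ U, conj (g (conj z)) = g z) (hslit : ∀ z ∈ U, g z ∈ slitPlane) :
    ∃ h : ℂ → ℂ, DifferentiableOn ℂ h U ∧ ∀ z ∈ U, g z = h z * conj (h (conj z)) := by
  refine ⟨fun z => exp (log (g z) / 2), ((hg.clog hslit).div_const 2).cexp, fun z hz => ?_⟩
  rw [conj_exp_log_div_two (slitPlane_arg_ne_pi (hslit _ (hsym z hz))), hgsym z hz,
    exp_log_div_two_mul_self (slitPlane_ne_zero (hslit z hz))]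

theorem stmt_16_general (U : Set ℂ)
    (hsym : ∀ z : ℂ, z ∈ U ↔ conj z ∈ U)
    (g : ℂ → ℂ) (hg : DifferentiableOn ℂ g U)
    (hgsym : ∀ z ∈ U, conj (g (conj z)) = g z)
    (hre : ∀ z ∈ U, 0 < (g z).re) :
    ∃ h : ℂ → ℂ, DifferentiableOn ℂ h U ∧
      ∀ z ∈ U, g z = h z * conj (h (conj z)) :=
  exists_eq_mul_conj_comp_conj_of_mapsTo_slitPlane (fun z => (hsym z).1) hg hgsym
    fun z hz => Or.inl (hre z hz)

/-- Factorization `g = h · h*` used in the paper to renormalize the basis near the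
cross: a holomorphic function `g` on a conjugation-symmetric open set `U`, with
`g* = g` and `Re g > 0`, can be written `g(z) = h(z) · conj(h(conj z))` for some
holomorphic `h` on `U`. -/
theorem stmt_16 (U : Set ℂ) (hUopen : IsOpen U)
    (hsym : ∀ z : ℂ, z ∈ U ↔ conj z ∈ U)
    (g : ℂ → ℂ) (hg : DifferentiableOn ℂ g U)
    (hgsym : ∀ z ∈ U, conj (g (conj z)) = g z)
    (hre : ∀ z ∈ U, 0 < (g z).re) :
    ∃ h : ℂ → ℂ, DifferentiableOn ℂ h U ∧
      ∀ z ∈ U, g z = h z * conj (h (conj z)) :=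
  stmt_16_general U hsym g hg hgsym hre
end
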